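/- Let V be uniformly distributed on a finite set 𝒱 with |𝒱| ≥ 2, let ρ : 𝒱 × 𝒱 → ℝ be symmetric, and let t ≥ 0 with neighborhood sizes N_max_t and N_min_t satisfying |𝒱| − N_min_t > N_max_t. Then for any Markov chain V → X → V̂, ℙ(ρ(V̂, V) > t) ≥ 1 − (I(V; X) + log 2) / log(|𝒱| / N_max_t), where I(V; X) is the mutual information between V and X. -/

import Mathlib

open MeasureTheory ProbabilityTheory Real
open scoped Classical ENNReal

/-- Shannon entropy (natural log) of a random variable with values in a finite set. -/
noncomputable def shannonEntropy {Ω 𝒱 : Type*} [MeasurableSpace Ω] [Fintype 𝒱]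
    (μ : Measure Ω) (V : Ω → 𝒱) : ℝ :=
  ∑ v : 𝒱, Real.negMulLog (μ (V ⁻¹' {v})).toReal

/-- Conditional Shannon entropy `H(V | X)` (natural log) of a finitely-valued random
variable `V` given a general random variable `X`. -/
noncomputable def condEntropyGen {Ω 𝒱 𝒳 : Type*} [MeasurableSpace Ω] [Fintype 𝒱]
    [MeasurableSpace 𝒳] (μ : Measure Ω) (V : Ω → 𝒱) (X : Ω → 𝒳) : ℝ :=
  ∫ ω, ∑ v : 𝒱, Real.negMulLog
    ((μ[(V ⁻¹' {v}).indicator (fun _ => (1 : ℝ)) | MeasurableSpace.comap X inferInstance]) ω) ∂μ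

/-- Mutual information `I(V; X) = H(V) - H(V | X)` for a finitely-valued `V`. -/
noncomputable def mutualInfoFin {Ω 𝒱 𝒳 : Type*} [MeasurableSpace Ω] [Fintype 𝒱]
    [MeasurableSpace 𝒳] (μ : Measure Ω) (V : Ω → 𝒱) (X : Ω → 𝒳) : ℝ :=
  shannonEntropy μ V - condEntropyGen μ V X

/-- Markov chain `V → X → W`: `V` and `W` are conditionally independent given `X`. -/
def MarkovChain {Ω 𝒜 𝒳 ℬ : Type*} [MeasurableSpace Ω] [MeasurableSpace 𝒜]
    [MeasurableSpace 𝒳] [MeasurableSpace ℬ]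
    (μ : Measure Ω) (V : Ω → 𝒜) (X : Ω → 𝒳) (W : Ω → ℬ) : Prop :=
  ∀ (A : Set 𝒜) (B : Set ℬ), MeasurableSet A → MeasurableSet B →
    (μ[fun ω => (V ⁻¹' A).indicator (fun _ => (1 : ℝ)) ω
          * (W ⁻¹' B).indicator (fun _ => (1 : ℝ)) ω
        | MeasurableSpace.comap X inferInstance])
      =ᵐ[μ]
    fun ω => (μ[(V ⁻¹' A).indicator (fun _ => (1 : ℝ)) | MeasurableSpace.comap X inferInstance]) ω
          * (μ[(W ⁻¹' B).indicator (fun _ => (1 : ℝ)) | MeasurableSpace.comap X inferInstance]) ω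

/-!
Conditionally on `X`, split the posterior law of `V` along the ball `B` of radius `t` around
`V̂` (at most `N_max` points) and its complement: its entropy is at most
`log 2 + s log N_max + (1 - s) log |𝒱|`, where `s` is the posterior mass of `B`. This bound is
affine in `s`, and by the Markov property the average of `s` is `ℙ(ρ(V̂, V) ≤ t)`. Since
`H(V) = log |𝒱|`, integrating gives `ℙ(ρ(V̂, V) ≤ t) · log (|𝒱| / N_max) ≤ I(V; X) + log 2`.
-/

namespace Real

theorem log_natCast_le_log_natCast {m n : ℕ} (h : m ≤ n) : log m ≤ log n := by
  rcases m.eq_zero_or_pos with rfl | hm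
  · simpa using log_natCast_nonneg n
  · exact log_le_log (by exact_mod_cast hm) (by exact_mod_cast h)

theorem sum_negMulLog_le_negMulLog_sum_add {ι : Type*} (s : Finset ι) {q : ι → ℝ}
    (hq : ∀ i ∈ s, 0 ≤ q i) :
    ∑ i ∈ s, negMulLog (q i) ≤ negMulLog (∑ i ∈ s, q i) + (∑ i ∈ s, q i) * log s.card := by
  rcases s.eq_empty_or_nonempty with rfl | hs
  · simp
  set n : ℝ := (s.card : ℝ)
  have hn : 0 < n := Nat.cast_pos.mpr hs.card_pos
  have jensen := concaveOn_negMulLog.le_map_sum (t := s) (w := fun _ => n⁻¹) (p := q)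
    (fun _ _ => by positivity) (by simp [n, hn.ne']) hq
  simp only [smul_eq_mul, ← Finset.mul_sum] at jensen
  calc ∑ i ∈ s, negMulLog (q i) = n * (n⁻¹ * ∑ i ∈ s, negMulLog (q i)) := by field_simp
    _ ≤ n * negMulLog (n⁻¹ * ∑ i ∈ s, q i) := by gcongr
    _ = _ := by
      rw [negMulLog_mul, negMulLog, log_inv]
      field_simp
      ring

variable {α : Type*} [Fintype α] {q : α → ℝ}

/-- The `log 2` is the binary entropy of the split between `B` and `Bᶜ`. -/
theorem sum_negMulLog_le_log_two_add (hq0 : ∀ a, 0 ≤ q a) (hq1 : ∑ a, q a = 1)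
    (B : Finset α) :
    ∑ a, negMulLog (q a) ≤ log 2 + (∑ a ∈ B, q a) * log B.card
      + (1 - ∑ a ∈ B, q a) * log Bᶜ.card := by
  have hcompl : ∑ a ∈ Bᶜ, q a = 1 - ∑ a ∈ B, q a := by
    rw [← hq1, ← Finset.sum_add_sum_compl B]; ring
  have hB := sum_negMulLog_le_negMulLog_sum_add B fun a _ => hq0 a
  have hBc := sum_negMulLog_le_negMulLog_sum_add Bᶜ fun a _ => hq0 a
  have hbin := binEntropy_le_log_two (p := ∑ a ∈ B, q a)
  rw [binEntropy_eq_negMulLog_add_negMulLog_one_sub] at hbin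
  rw [hcompl] at hBc
  rw [← Finset.sum_add_sum_compl B]
  linarith

theorem sum_negMulLog_le_of_card_le (hq0 : ∀ a, 0 ≤ q a) (hq1 : ∑ a, q a = 1)
    {B : Finset α} {N : ℕ} (hB : B.card ≤ N) :
    ∑ a, negMulLog (q a) ≤ log (Fintype.card α) + log 2
      - (∑ a ∈ B, q a) * (log (Fintype.card α) - log N) := by
  have hs0 : 0 ≤ ∑ a ∈ B, q a := Finset.sum_nonneg fun a _ => hq0 a
  have hs1 : ∑ a ∈ B, q a ≤ 1 := hq1 ▸ Finset.sum_le_univ_sum_of_nonneg hq0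
  have hlogB := mul_le_mul_of_nonneg_left (log_natCast_le_log_natCast hB) hs0
  have hlogBc := mul_le_mul_of_nonneg_left
    (log_natCast_le_log_natCast (Finset.card_le_univ Bᶜ)) (sub_nonneg.mpr hs1)
  linarith [sum_negMulLog_le_log_two_add hq0 hq1 B]

/-- The bound of `sum_negMulLog_le_of_card_le` is affine in the captured mass, so it survives
averaging over a family of small sets. -/
theorem sum_negMulLog_le_of_forall_card_le (hq0 : ∀ a, 0 ≤ q a) (hq1 : ∑ a, q a = 1)
    {ι : Type*} [Fintype ι] {r : ι → ℝ} (hr0 : ∀ i, 0 ≤ r i) (hr1 : ∑ i, r i = 1)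
    {P : ι → Finset α} {N : ℕ} (hP : ∀ i, (P i).card ≤ N) :
    ∑ a, negMulLog (q a) ≤ log (Fintype.card α) + log 2
      - (∑ i, r i * ∑ a ∈ P i, q a) * (log (Fintype.card α) - log N) := by
  calc ∑ a, negMulLog (q a) = ∑ i, r i * ∑ a, negMulLog (q a) := by
        rw [← Finset.sum_mul, hr1, one_mul]
    _ ≤ ∑ i, r i * (log (Fintype.card α) + log 2
          - (∑ a ∈ P i, q a) * (log (Fintype.card α) - log N)) :=
        Finset.sum_le_sum fun i _ =>
          mul_le_mul_of_nonneg_left (sum_negMulLog_le_of_card_le hq0 hq1 (hP i)) (hr0 i)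
    _ = _ := by
        simp only [mul_sub, Finset.sum_sub_distrib, ← Finset.sum_mul, hr1, one_mul, ← mul_assoc]

end Real

section CondProb

variable {Ω α : Type*} {m mΩ : MeasurableSpace Ω} {μ : Measure Ω}

noncomputable def condProbEq (μ : Measure Ω) (m : MeasurableSpace Ω) (V : Ω → α) (a : α) :
    Ω → ℝ :=
  μ[(V ⁻¹' {a}).indicator (fun _ => (1 : ℝ)) | m]

theorem condProbEq_nonneg (V : Ω → α) (a : α) : 0 ≤ᵐ[μ] condProbEq μ m V a :=
  condExp_nonneg (ae_of_all _ fun _ => Set.indicator_nonneg (fun _ _ => zero_le_one) _)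

theorem ae_sum_condProbEq_eq_one [Fintype α] [MeasurableSpace α] [MeasurableSingletonClass α]
    [IsFiniteMeasure μ] (hm : m ≤ mΩ) {V : Ω → α} (hV : Measurable V) :
    ∀ᵐ ω ∂μ, ∑ a, condProbEq μ m V a ω = 1 := by
  have hsum : ∑ a, (V ⁻¹' {a}).indicator (fun _ => (1 : ℝ)) = fun _ => 1 := by
    ext ω
    simp [Finset.sum_apply, Set.indicator_apply]
  have h := condExp_finsetSum (μ := μ) (s := Finset.univ)
    (fun a _ => (integrable_const (1 : ℝ)).indicator (hV (measurableSet_singleton a))) m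
  rw [hsum, condExp_const hm] at h
  filter_upwards [h] with ω hω
  simpa [Finset.sum_apply, condProbEq] using hω.symm

theorem ae_condProbEq_le_one [Fintype α] [MeasurableSpace α] [MeasurableSingletonClass α]
    [IsFiniteMeasure μ] (hm : m ≤ mΩ) {V : Ω → α} (hV : Measurable V) (a : α) :
    condProbEq μ m V a ≤ᵐ[μ] 1 := by
  filter_upwards [ae_all_iff.mpr fun b => condProbEq_nonneg (μ := μ) (m := m) V b,
    ae_sum_condProbEq_eq_one hm hV] with ω h0 h1
  rw [Pi.one_apply, ← h1]
  exact Finset.single_le_sum (fun b _ => h0 b) (Finset.mem_univ a)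

end CondProb

theorem shannonEntropy_eq_log_card {Ω α : Type*} [MeasurableSpace Ω] [Fintype α]
    {μ : Measure Ω} {V : Ω → α}
    (huniform : ∀ v : α, μ (V ⁻¹' {v}) = (Fintype.card α : ℝ≥0∞)⁻¹) :
    shannonEntropy μ V = log (Fintype.card α) := by
  simp only [shannonEntropy, huniform, ENNReal.toReal_inv, ENNReal.toReal_natCast, negMulLog,
    log_inv, Finset.sum_const, Finset.card_univ, nsmul_eq_mul]
  rcases eq_or_ne (Fintype.card α : ℝ) 0 with h | h
  · simp [h]
  · field_simp

section Fano

variable {Ω 𝒳 α : Type*} [MeasurableSpace Ω] [MeasurableSpace 𝒳]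
  [Fintype α] [MeasurableSpace α] [MeasurableSingletonClass α]
  {μ : Measure Ω} {V W : Ω → α} {X : Ω → 𝒳}

local notation "σ(" Y ")" => MeasurableSpace.comap Y inferInstance

theorem measurableSet_mem_apply (hV : Measurable V) (hW : Measurable W) (P : α → Finset α) :
    MeasurableSet {ω | V ω ∈ P (W ω)} :=
  (hV.prodMk hW) (Set.toFinite {p : α × α | p.1 ∈ P p.2}).measurableSet

theorem condExp_indicator_mem_ae_eq [IsFiniteMeasure μ] (hV : Measurable V) (hW : Measurable W)
    (hmarkov : MarkovChain μ V X W) (P : α → Finset α) :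
    μ[{ω | V ω ∈ P (W ω)}.indicator (fun _ => (1 : ℝ)) | σ(X)]
      =ᵐ[μ] fun ω => ∑ w, ∑ v ∈ P w, condProbEq μ σ(X) V v ω
        * condProbEq μ σ(X) W w ω := by
  have hsplit : {ω | V ω ∈ P (W ω)}.indicator (fun _ => (1 : ℝ))
      = ∑ x ∈ Finset.univ.sigma P, fun ω => (V ⁻¹' {x.2}).indicator (fun _ => (1 : ℝ)) ω
        * (W ⁻¹' {x.1}).indicator (fun _ => (1 : ℝ)) ω := by
    ext ω
    rw [Finset.sum_apply, Finset.sum_sigma]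
    simp [Set.indicator_apply]
  have hint : ∀ x ∈ Finset.univ.sigma P, Integrable (fun ω =>
      (V ⁻¹' {x.2}).indicator (fun _ => (1 : ℝ)) ω
        * (W ⁻¹' {x.1}).indicator (fun _ => (1 : ℝ)) ω) μ := fun x _ =>
    ((integrable_const (1 : ℝ)).indicator (hW (measurableSet_singleton x.1))).bdd_mul (c := 1)
      ((aemeasurable_const.indicator (hV (measurableSet_singleton x.2))).aestronglyMeasurable)
      (ae_of_all _ fun ω => by by_cases h : ω ∈ V ⁻¹' {x.2} <;> simp [h])
  rw [hsplit]
  filter_upwards [condExp_finsetSum hint _, ae_all_iff.mpr fun x : (_ : α) × α =>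
    hmarkov {x.2} {x.1} (measurableSet_singleton _) (measurableSet_singleton _)] with ω hsum hfac
  rw [hsum, Finset.sum_apply, Finset.sum_sigma]
  exact Finset.sum_congr rfl fun w _ => Finset.sum_congr rfl fun v _ => hfac ⟨w, v⟩

theorem condEntropyGen_le [IsProbabilityMeasure μ] (hX : Measurable X) (hV : Measurable V)
    (hW : Measurable W) (hmarkov : MarkovChain μ V X W) {P : α → Finset α} {N : ℕ}
    (hP : ∀ w, (P w).card ≤ N) :
    condEntropyGen μ V X ≤ log (Fintype.card α) + log 2
      - μ.real {ω | V ω ∈ P (W ω)} * (log (Fintype.card α) - log N) := by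
  have hm := hX.comap_le
  set S : Ω → ℝ := fun ω => ∑ w, ∑ v ∈ P w, condProbEq μ σ(X) V v ω * condProbEq μ σ(X) W w ω
  have hS := condExp_indicator_mem_ae_eq hV hW hmarkov P
  have hS_int : Integrable S μ := integrable_condExp.congr hS
  have hS_integral : ∫ ω, S ω ∂μ = μ.real {ω | V ω ∈ P (W ω)} :=
    (integral_congr_ae hS).symm.trans
      (integral_condExp_indicator hX (measurableSet_mem_apply hV hW P))
  have hq0 : ∀ᵐ ω ∂μ, ∀ v, 0 ≤ condProbEq μ σ(X) V v ω :=
    ae_all_iff.mpr fun v => condProbEq_nonneg V v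
  have hr0 : ∀ᵐ ω ∂μ, ∀ w, 0 ≤ condProbEq μ σ(X) W w ω :=
    ae_all_iff.mpr fun w => condProbEq_nonneg W w
  have hbound : ∀ᵐ ω ∂μ, ∑ v, negMulLog (condProbEq μ σ(X) V v ω)
      ≤ log (Fintype.card α) + log 2 - S ω * (log (Fintype.card α) - log N) := by
    filter_upwards [hq0, ae_sum_condProbEq_eq_one hm hV, hr0, ae_sum_condProbEq_eq_one hm hW]
      with ω hq0 hq1 hr0 hr1
    convert Real.sum_negMulLog_le_of_forall_card_le hq0 hq1 hr0 hr1 hP using 3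
    simp only [S, Finset.mul_sum, mul_comm]
  have hnonneg : ∀ᵐ ω ∂μ, 0 ≤ ∑ v, negMulLog (condProbEq μ σ(X) V v ω) := by
    filter_upwards [hq0, ae_all_iff.mpr fun v => ae_condProbEq_le_one hm hV v] with ω hq0 hq1
    exact Finset.sum_nonneg fun v _ => negMulLog_nonneg (hq0 v) (hq1 v)
  calc condEntropyGen μ V X = ∫ ω, ∑ v, negMulLog (condProbEq μ σ(X) V v ω) ∂μ := rfl
    _ ≤ ∫ ω, log (Fintype.card α) + log 2 - S ω * (log (Fintype.card α) - log N) ∂μ :=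
      integral_mono_of_nonneg hnonneg ((integrable_const _).sub (hS_int.mul_const _)) hbound
    _ = _ := by
      rw [integral_sub (integrable_const _) (hS_int.mul_const _), integral_const,
        integral_mul_const, hS_integral, probReal_univ, one_smul]

theorem measureReal_mem_mul_le_mutualInfoFin [IsProbabilityMeasure μ] (hX : Measurable X)
    (hV : Measurable V) (hW : Measurable W) (hmarkov : MarkovChain μ V X W)
    (huniform : ∀ v : α, μ (V ⁻¹' {v}) = (Fintype.card α : ℝ≥0∞)⁻¹)
    {P : α → Finset α} {N : ℕ} (hP : ∀ w, (P w).card ≤ N) :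
    μ.real {ω | V ω ∈ P (W ω)} * (log (Fintype.card α) - log N)
      ≤ mutualInfoFin μ V X + log 2 := by
  have := condEntropyGen_le hX hV hW hmarkov hP
  rw [mutualInfoFin, shannonEntropy_eq_log_card huniform]
  linarith

end Fano

theorem distance_fano_mutual_information_general
    {Ω 𝒳 𝒱 : Type*} [MeasurableSpace Ω] [MeasurableSpace 𝒳]
    [Fintype 𝒱] [MeasurableSpace 𝒱] [MeasurableSingletonClass 𝒱]
    (μ : Measure Ω) [IsProbabilityMeasure μ]
    (V : Ω → 𝒱) (X : Ω → 𝒳) (Vhat : Ω → 𝒱)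
    (hV : Measurable V) (hX : Measurable X) (hVhat : Measurable Vhat)
    (huniform : ∀ v : 𝒱, μ (V ⁻¹' {v}) = (Fintype.card 𝒱 : ℝ≥0∞)⁻¹)
    (hmarkov : MarkovChain μ V X Vhat)
    (ρ : 𝒱 → 𝒱 → ℝ)
    (t : ℝ)
    (Nmax Nmin : ℕ)
    (hNmax : Nmax = Finset.univ.sup fun v : 𝒱 =>
      (Finset.univ.filter fun v' : 𝒱 => ρ v v' ≤ t).card)
    (hsep : Nmax + Nmin < Fintype.card 𝒱) :
    (μ {ω | ρ (Vhat ω) (V ω) > t}).toReal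
      ≥ 1 - (mutualInfoFin μ V X + Real.log 2)
          / Real.log ((Fintype.card 𝒱 : ℝ) / Nmax) := by
  set P : 𝒱 → Finset 𝒱 := fun w => Finset.univ.filter fun v => ρ w v ≤ t
  have hP : ∀ w, (P w).card ≤ Nmax :=
    fun w => hNmax ▸ Finset.le_sup (f := fun w => (P w).card) (Finset.mem_univ w)
  have herror : μ.real {ω | ρ (Vhat ω) (V ω) > t} = 1 - μ.real {ω | V ω ∈ P (Vhat ω)} := by
    rw [← probReal_compl_eq_one_sub (measurableSet_mem_apply hV hVhat P)]
    congr 1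
    ext ω
    simp [P]
  rw [ge_iff_le, ← measureReal_def, herror, sub_le_sub_iff_left]
  rcases Nmax.eq_zero_or_pos with rfl | hNmax_pos
  · simp only [Nat.le_zero, Finset.card_eq_zero] at hP
    simp [hP]
  have hNmax_lt : (Nmax : ℝ) < Fintype.card 𝒱 := by exact_mod_cast (by omega : Nmax < _)
  have hlog : log ((Fintype.card 𝒱 : ℝ) / Nmax) = log (Fintype.card 𝒱) - log Nmax :=
    log_div (by linarith) (by positivity)
  have hlog_pos : 0 < log ((Fintype.card 𝒱 : ℝ) / Nmax) :=
    log_pos ((one_lt_div (by positivity)).mpr hNmax_lt)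
  rw [le_div_iff₀ hlog_pos, hlog]
  exact measureReal_mem_mul_le_mutualInfoFin hX hV hVhat hmarkov huniform hP

/-- **Mutual-information form of the distance-based Fano inequality (Corollary 1).**
If `V` is uniform on a finite set `𝒱` with `|𝒱| ≥ 2` and `|𝒱| - N_min_t > N_max_t`, then
for any Markov chain `V → X → V̂`,
`ℙ(ρ(V̂, V) > t) ≥ 1 - (I(V; X) + log 2) / log(|𝒱| / N_max_t)`. -/
theorem distance_fano_mutual_information
    {Ω 𝒳 𝒱 : Type*} [MeasurableSpace Ω] [MeasurableSpace 𝒳]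
    [Fintype 𝒱] [MeasurableSpace 𝒱] [MeasurableSingletonClass 𝒱]
    (hcard : 2 ≤ Fintype.card 𝒱)
    (μ : Measure Ω) [IsProbabilityMeasure μ]
    (V : Ω → 𝒱) (X : Ω → 𝒳) (Vhat : Ω → 𝒱)
    (hV : Measurable V) (hX : Measurable X) (hVhat : Measurable Vhat)
    (huniform : ∀ v : 𝒱, μ (V ⁻¹' {v}) = (Fintype.card 𝒱 : ℝ≥0∞)⁻¹)
    (hmarkov : MarkovChain μ V X Vhat)
    (ρ : 𝒱 → 𝒱 → ℝ) (hsymm : ∀ v w, ρ v w = ρ w v)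
    (t : ℝ) (ht : 0 ≤ t)
    (Nmax Nmin : ℕ)
    (hNmax : Nmax = Finset.univ.sup fun v : 𝒱 =>
      (Finset.univ.filter fun v' : 𝒱 => ρ v v' ≤ t).card)
    (hNmin : Nmin = sInf (Set.range fun v : 𝒱 =>
      (Finset.univ.filter fun v' : 𝒱 => ρ v v' ≤ t).card))
    (hsep : Nmax + Nmin < Fintype.card 𝒱) :
    (μ {ω | ρ (Vhat ω) (V ω) > t}).toReal
      ≥ 1 - (mutualInfoFin μ V X + Real.log 2)
          / Real.log ((Fintype.card 𝒱 : ℝ) / Nmax) :=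
  distance_fano_mutual_information_general μ V X Vhat hV hX hVhat huniform hmarkov ρ t Nmax Nmin
    hNmax hsep
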